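/- arXiv:1909.02098 — 2 statements merged into one kernel-verified Lean document; each statement's English description precedes it below -/
import Mathlib

section
/- The group presented by five generators a₁, a₂, g, s₁, s₂ subject to the two relators a₁·g⁻¹·a₁⁻¹·g⁻¹·s₁ and a₂·g⁻¹·a₂⁻¹·s₂ is isomorphic to the free group on three generators. -/
open FreeGroup in
theorem stmt1 :
    Nonempty (PresentedGroup
      ({(of 0 : FreeGroup (Fin 5)) * (of 2)⁻¹ * (of 0)⁻¹ * (of 2)⁻¹ * of 3,
        (of 1 : FreeGroup (Fin 5)) * (of 2)⁻¹ * (of 1)⁻¹ * of 4} :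
        Set (FreeGroup (Fin 5))) ≃* FreeGroup (Fin 3)) := by
  set rels : Set (FreeGroup (Fin 5)) :=
    {(of 0 : FreeGroup (Fin 5)) * (of 2)⁻¹ * (of 0)⁻¹ * (of 2)⁻¹ * of 3,
     (of 1 : FreeGroup (Fin 5)) * (of 2)⁻¹ * (of 1)⁻¹ * of 4} with hrels
  set F : Fin 5 → FreeGroup (Fin 3) :=
    ![of 0, of 1, of 2, of 2 * of 0 * of 2 * (of 0)⁻¹, of 1 * of 2 * (of 1)⁻¹] with hF
  have hrel : ∀ r ∈ rels, FreeGroup.lift F r = 1 := by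
    intro r hr
    rcases hr with h | h <;> subst h <;>
      simp only [_root_.map_mul, _root_.map_inv, FreeGroup.lift_apply_of, hF] <;>
      simp only [Matrix.cons_val_zero, Matrix.cons_val_one, Matrix.head_cons,
        Matrix.cons_val_two, Matrix.tail_cons, Matrix.cons_val_three, Matrix.cons_val_four] <;>
      group
  let φ : PresentedGroup rels →* FreeGroup (Fin 3) := PresentedGroup.toGroup hrel
  let ψ : FreeGroup (Fin 3) →* PresentedGroup rels :=
    FreeGroup.lift fun i => PresentedGroup.of (i.castLE (by omega))
  have key1 : (PresentedGroup.of 3 : PresentedGroup rels) =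
      PresentedGroup.of 2 * PresentedGroup.of 0 * PresentedGroup.of 2 *
        (PresentedGroup.of 0)⁻¹ := by
    have h1 : PresentedGroup.mk rels ((of 0 : FreeGroup (Fin 5)) * (of 2)⁻¹ * (of 0)⁻¹ *
        (of 2)⁻¹ * of 3) = 1 := by
      apply (QuotientGroup.eq_one_iff _).mpr
      exact Subgroup.subset_normalClosure (Or.inl rfl)
    simp only [_root_.map_mul, _root_.map_inv] at h1
    have h2 := mul_eq_one_iff_inv_eq.mp h1
    change _ = (PresentedGroup.mk rels (of 3) : PresentedGroup rels) at h2
    change (PresentedGroup.mk rels (of 3) : PresentedGroup rels) = _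
    rw [← h2]
    group
    simp only [zpow_neg_one]
    rfl
  have key2 : (PresentedGroup.of 4 : PresentedGroup rels) =
      PresentedGroup.of 1 * PresentedGroup.of 2 * (PresentedGroup.of 1)⁻¹ := by
    have h1 : PresentedGroup.mk rels ((of 1 : FreeGroup (Fin 5)) * (of 2)⁻¹ * (of 1)⁻¹ *
        of 4) = 1 := by
      apply (QuotientGroup.eq_one_iff _).mpr
      exact Subgroup.subset_normalClosure (Or.inr rfl)
    simp only [_root_.map_mul, _root_.map_inv] at h1
    have h2 := mul_eq_one_iff_inv_eq.mp h1
    change _ = (PresentedGroup.mk rels (of 4) : PresentedGroup rels) at h2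
    change (PresentedGroup.mk rels (of 4) : PresentedGroup rels) = _
    rw [← h2]
    group
    simp only [zpow_neg_one]
    rfl
  have hψφ : ψ.comp φ = MonoidHom.id _ := by
    apply PresentedGroup.ext
    intro x
    fin_cases x
    · show ψ (φ (PresentedGroup.of (0 : Fin 5))) = PresentedGroup.of (0 : Fin 5)
      rw [show φ (PresentedGroup.of (0 : Fin 5)) = of (0 : Fin 3) from
        PresentedGroup.toGroup.of hrel]
      exact FreeGroup.lift_apply_of
    · show ψ (φ (PresentedGroup.of (1 : Fin 5))) = PresentedGroup.of (1 : Fin 5)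
      rw [show φ (PresentedGroup.of (1 : Fin 5)) = of (1 : Fin 3) from
        PresentedGroup.toGroup.of hrel]
      exact FreeGroup.lift_apply_of
    · show ψ (φ (PresentedGroup.of (2 : Fin 5))) = PresentedGroup.of (2 : Fin 5)
      rw [show φ (PresentedGroup.of (2 : Fin 5)) = of (2 : Fin 3) from
        PresentedGroup.toGroup.of hrel]
      exact FreeGroup.lift_apply_of
    · show ψ (φ (PresentedGroup.of (3 : Fin 5))) = PresentedGroup.of (3 : Fin 5)
      have : φ (PresentedGroup.of (3 : Fin 5)) = of 2 * of 0 * of 2 * (of 0)⁻¹ :=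
        PresentedGroup.toGroup.of hrel
      rw [this, key1]
      simp only [_root_.map_mul, _root_.map_inv, FreeGroup.lift_apply_of, ψ]
      rfl
    · show ψ (φ (PresentedGroup.of (4 : Fin 5))) = PresentedGroup.of (4 : Fin 5)
      have : φ (PresentedGroup.of (4 : Fin 5)) = of 1 * of 2 * (of 1)⁻¹ :=
        PresentedGroup.toGroup.of hrel
      rw [this, key2]
      simp only [_root_.map_mul, _root_.map_inv, FreeGroup.lift_apply_of, ψ]
      rfl
  have hφψ : φ.comp ψ = MonoidHom.id _ := by
    apply FreeGroup.ext_hom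
    intro x
    fin_cases x
    · show φ (ψ (of (0 : Fin 3))) = of (0 : Fin 3)
      rw [show ψ (of (0 : Fin 3)) = PresentedGroup.of (0 : Fin 5) from FreeGroup.lift_apply_of]
      exact PresentedGroup.toGroup.of hrel
    · show φ (ψ (of (1 : Fin 3))) = of (1 : Fin 3)
      rw [show ψ (of (1 : Fin 3)) = PresentedGroup.of (1 : Fin 5) from FreeGroup.lift_apply_of]
      exact PresentedGroup.toGroup.of hrel
    · show φ (ψ (of (2 : Fin 3))) = of (2 : Fin 3)
      rw [show ψ (of (2 : Fin 3)) = PresentedGroup.of (2 : Fin 5) from FreeGroup.lift_apply_of]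
      exact PresentedGroup.toGroup.of hrel
  exact ⟨MulEquiv.mk ⟨φ, ψ, fun x => congrFun (congrArg DFunLike.coe hψφ) x,
    fun x => congrFun (congrArg DFunLike.coe hφψ) x⟩ (map_mul φ)⟩
end

section
/- Let k ≥ 1, let D be a diagonal unitary k×k matrix, let σ be a permutation of Fin k, and let z ∈ ℂ with |z| = 1. Then the matrices U_γ := D and W := z·P_σ satisfy the commutation relation U_γ·(W·U_γ·W⁻¹) = (W·U_γ·W⁻¹)·U_γ. Consequently, for any unitary U there is a group homomorphism from G = ⟨a,b,c | [c,(ab)c(ab)⁻¹]=1⟩ to the unitary group U(k) with a ↦ U, b ↦ U⁻¹·z·P_σ, c ↦ D. -/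
/-- The permutation matrix of `σ`: entry `(i,j)` is `1` if `i = σ j`, else `0`. -/
def permMat {k : ℕ} (σ : Equiv.Perm (Fin k)) : Matrix (Fin k) (Fin k) ℂ :=
  fun i j => if i = σ j then 1 else 0

lemma permMat_mul_inv {k : ℕ} (σ : Equiv.Perm (Fin k)) : permMat σ * permMat σ⁻¹ = 1 := by
  ext i l
  simp [Matrix.mul_apply, permMat, Matrix.one_apply, Equiv.eq_symm_apply]
  simp [Equiv.apply_eq_iff_eq_symm_apply]

lemma star_permMat {k : ℕ} (σ : Equiv.Perm (Fin k)) : star (permMat σ) = permMat σ⁻¹ := by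
  ext i j
  simp only [Matrix.star_apply, permMat, Equiv.Perm.inv_def, Equiv.eq_symm_apply, eq_comm]
  split <;> simp

lemma conj_apply {k : ℕ} (σ : Equiv.Perm (Fin k)) (D : Matrix (Fin k) (Fin k) ℂ)
    (i j : Fin k) :
    (permMat σ * D * permMat σ⁻¹) i j = D (σ⁻¹ i) (σ⁻¹ j) := by
  have h1 : ∀ x, (i = σ x) ↔ (σ.symm i = x) := fun x => (σ.symm_apply_eq).symm
  simp only [Matrix.mul_apply, permMat, Equiv.Perm.inv_def,
    ite_mul, one_mul, zero_mul, mul_ite, mul_one, mul_zero, h1,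
    Finset.sum_ite_eq, Finset.sum_ite_eq', Finset.mem_univ, if_true]

lemma diag_comm {k : ℕ} (A B : Matrix (Fin k) (Fin k) ℂ)
    (hA : ∀ i j, i ≠ j → A i j = 0) (hB : ∀ i j, i ≠ j → B i j = 0) :
    A * B = B * A := by
  ext i j
  rw [Matrix.mul_apply, Matrix.mul_apply]
  rcases eq_or_ne i j with rfl | h
  · rw [Finset.sum_eq_single i (fun l _ hl => by rw [hA i l (Ne.symm hl), zero_mul])
      (fun h => absurd (Finset.mem_univ i) h),
      Finset.sum_eq_single i (fun l _ hl => by rw [hB i l (Ne.symm hl), zero_mul])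
      (fun h => absurd (Finset.mem_univ i) h), mul_comm]
  · have key0 : ∀ (X Y : Matrix (Fin k) (Fin k) ℂ), (∀ a b, a ≠ b → X a b = 0) →
        (∀ a b, a ≠ b → Y a b = 0) → ∀ l : Fin k, X i l * Y l j = 0 := by
      intro X Y hX hY l
      rcases eq_or_ne i l with rfl | hil
      · rw [hY i j h, mul_zero]
      · rw [hX i l hil, zero_mul]
    rw [Finset.sum_eq_zero fun l _ => key0 A B hA hB l,
      Finset.sum_eq_zero fun l _ => key0 B A hB hA l]

open FreeGroup in
theorem stmt9 (k : ℕ) (hk : 1 ≤ k) (D : Matrix (Fin k) (Fin k) ℂ)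
    (hDdiag : ∀ i j, i ≠ j → D i j = 0)
    (hDu : D ∈ Matrix.unitaryGroup (Fin k) ℂ)
    (σ : Equiv.Perm (Fin k)) (z : ℂ) (hz : ‖z‖ = 1) :
    (D * ((z • permMat σ) * D * (z • permMat σ)⁻¹) =
      ((z • permMat σ) * D * (z • permMat σ)⁻¹) * D) ∧
    ∀ U : Matrix.unitaryGroup (Fin k) ℂ,
      ∃ ρ : PresentedGroup
          ({(of 2 : FreeGroup (Fin 3)) *
              (of 0 * of 1 * of 2 * (of 1)⁻¹ * (of 0)⁻¹) * (of 2)⁻¹ *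
              (of 0 * of 1 * of 2 * (of 1)⁻¹ * (of 0)⁻¹)⁻¹} : Set (FreeGroup (Fin 3)))
          →* Matrix.unitaryGroup (Fin k) ℂ,
        (ρ (PresentedGroup.of 0) : Matrix (Fin k) (Fin k) ℂ) = U ∧
        (ρ (PresentedGroup.of 1) : Matrix (Fin k) (Fin k) ℂ) =
          (↑U⁻¹ : Matrix (Fin k) (Fin k) ℂ) * (z • permMat σ) ∧
        (ρ (PresentedGroup.of 2) : Matrix (Fin k) (Fin k) ℂ) = D := by
  set W : Matrix (Fin k) (Fin k) ℂ := z • permMat σ with hW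
  have hzz : z * star z = 1 := by
    rw [Complex.star_def, Complex.mul_conj, ← Complex.sq_norm, hz]
    norm_num
  have hWsW : W * star W = 1 := by
    rw [hW, star_smul, star_permMat, Matrix.smul_mul, Matrix.mul_smul, smul_smul,
      permMat_mul_inv, hzz, one_smul]
  have hWinv : W⁻¹ = star W := (Matrix.inv_eq_right_inv hWsW)
  have hWu : W ∈ Matrix.unitaryGroup (Fin k) ℂ := by
    rw [Matrix.mem_unitaryGroup_iff]
    exact hWsW
  have hconj : W * D * W⁻¹ = permMat σ * D * permMat σ⁻¹ := by
    rw [hWinv, hW, star_smul, star_permMat, Matrix.smul_mul, Matrix.smul_mul,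
      Matrix.mul_smul, smul_smul, hzz, one_smul]
  have hEdiag : ∀ i j, i ≠ j → (W * D * W⁻¹) i j = 0 := by
    intro i j h
    rw [hconj, conj_apply]
    exact hDdiag _ _ (fun he => h (by simpa using congrArg σ he))
  have key : D * (W * D * W⁻¹) = (W * D * W⁻¹) * D :=
    diag_comm D (W * D * W⁻¹) hDdiag hEdiag
  refine ⟨key, fun U => ?_⟩
  set Du : Matrix.unitaryGroup (Fin k) ℂ := ⟨D, hDu⟩
  set Wu : Matrix.unitaryGroup (Fin k) ℂ := ⟨W, hWu⟩
  have hcomm : Du * (Wu * Du * Wu⁻¹) = (Wu * Du * Wu⁻¹) * Du := by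
    apply Subtype.ext
    simp only [Submonoid.coe_mul, Matrix.UnitaryGroup.inv_val]
    show D * (W * D * star W) = (W * D * star W) * D
    rw [← hWinv]; exact key
  let f : Fin 3 → Matrix.unitaryGroup (Fin k) ℂ := ![U, U⁻¹ * Wu, Du]
  have hrel : ∀ r ∈ ({(of 2 : FreeGroup (Fin 3)) *
      (of 0 * of 1 * of 2 * (of 1)⁻¹ * (of 0)⁻¹) * (of 2)⁻¹ *
      (of 0 * of 1 * of 2 * (of 1)⁻¹ * (of 0)⁻¹)⁻¹} : Set (FreeGroup (Fin 3))),
      FreeGroup.lift f r = 1 := by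
    intro r hr
    rw [Set.mem_singleton_iff] at hr
    subst hr
    simp only [MonoidHom.map_mul, MonoidHom.map_inv, FreeGroup.lift_apply_of]
    have hab : f 0 * f 1 = Wu := by
      show U * (U⁻¹ * Wu) = Wu
      exact mul_inv_cancel_left U Wu
    have hf2 : f 2 = Du := rfl
    have h01 : f 0 * f 1 * Du * (f 1)⁻¹ * (f 0)⁻¹ = Wu * Du * Wu⁻¹ := by
      rw [← hab, mul_inv_rev]
      group
    rw [hf2, h01, hcomm]
    group
  refine ⟨PresentedGroup.toGroup hrel, ?_, ?_, ?_⟩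
  · rw [PresentedGroup.toGroup.of]
    rfl
  · rw [PresentedGroup.toGroup.of]
    show ((U⁻¹ * Wu : Matrix.unitaryGroup (Fin k) ℂ) : Matrix (Fin k) (Fin k) ℂ) = _
    have hUinv : (↑U : Matrix (Fin k) (Fin k) ℂ)⁻¹ = star (↑U : Matrix (Fin k) (Fin k) ℂ) :=
      Matrix.inv_eq_right_inv (Matrix.mem_unitaryGroup_iff.mp U.2)
    simp only [Submonoid.coe_mul, Matrix.UnitaryGroup.inv_val]
    rfl
  · rw [PresentedGroup.toGroup.of]
    rfl
end
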